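/- For a, b₁, c ∈ ℂ with c and c−b₂ not nonpositive integers, Re(c−a−b₂) > 0, and real x with |x| < 1: F₁(a; b₁, b₂; c; x, 1) = (Γ(c)Γ(c−a−b₂))/(Γ(c−a)Γ(c−b₂)) · ₂F₁(a, b₁; c−b₂; x), assuming the double series defining the left side converges. -/

import Mathlib

/-- The Pochhammer symbol `(a)_n = a(a+1)⋯(a+n-1)`. -/
noncomputable def poch (a : ℂ) (n : ℕ) : ℂ := Polynomial.eval a (ascPochhammer ℂ n)

/-- `z` is not a nonpositive integer. -/
def NotNonposInt (z : ℂ) : Prop := ∀ m : ℕ, z ≠ -(m : ℂ)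

/-- The summand of the Appell `F₁` double series. -/
noncomputable def F1term (a b₁ b₂ c : ℂ) (x y : ℂ) (p : ℕ × ℕ) : ℂ :=
  poch a (p.1 + p.2) / poch c (p.1 + p.2) *
    (poch b₁ p.1 * poch b₂ p.2) / ((Nat.factorial p.1) * (Nat.factorial p.2)) *
    x ^ p.1 * y ^ p.2

/-- Appell's first function `F₁(a; b₁, b₂; c; x, y)`. -/
noncomputable def F1 (a b₁ b₂ c : ℂ) (x y : ℂ) : ℂ := ∑' p : ℕ × ℕ, F1term a b₁ b₂ c x y p

/-- The Gauss hypergeometric series `₂F₁(a,b;c;x)`. -/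
noncomputable def twoF1 (a b c x : ℂ) : ℂ :=
  ∑' k : ℕ, poch a k * poch b k / (poch c k * (Nat.factorial k)) * x ^ k

/-!
Summing the double series over `k` first, row `j` is `(a)_j (b₁)_j / ((c)_j j!) xʲ` times the
Gauss series `₂F₁(a + j, b₂; c + j; 1)`. Gauss's theorem evaluates it, and
`Γ(c + j) / Γ(c - b₂ + j) = (Γ(c) / Γ(c - b₂)) · (c)_j / (c - b₂)_j` turns the rows into the
terms of `₂F₁(a, b₁; c - b₂; x)`.

Gauss's theorem comes from the contiguous relation `c (c - a - b) S(c) = (c - a) (c - b) S(c + 1)`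
for `S(c) = ₂F₁(a, b; c; 1)`. Iterated `N` times, it writes `S(c)` as a ratio of Pochhammer
symbols times `S(c + N)`. As `N → ∞`, `S(c + N) → 1` by dominated convergence, and the Pochhammer
ratio tends to the Gamma quotient by Euler's limit formula for `Γ`.
-/

open Filter Finset Topology

lemma poch_zero (z : ℂ) : poch z 0 = 1 := by simp [poch]

lemma poch_succ (z : ℂ) (n : ℕ) : poch z (n + 1) = poch z n * (z + n) :=
  ascPochhammer_succ_eval n z

lemma poch_succ_left (z : ℂ) (n : ℕ) : poch z (n + 1) = z * poch (z + 1) n := by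
  simp [poch, ascPochhammer_succ_left]

lemma poch_eq_prod (z : ℂ) (n : ℕ) : poch z n = ∏ i ∈ range n, (z + i) := by
  induction n with
  | zero => simp [poch_zero]
  | succ n ih => rw [poch_succ, ih, prod_range_succ]

lemma poch_add (z : ℂ) (m n : ℕ) : poch z (m + n) = poch z m * poch (z + m) n := by
  simp only [poch_eq_prod, prod_range_add, Nat.cast_add, add_assoc]

lemma poch_neg_natCast_of_lt {m n : ℕ} (h : m < n) : poch (-m) n = 0 :=
  ascPochhammer_eval_neg_coe_nat_of_lt h

namespace NotNonposInt

lemma ne_zero {z : ℂ} (hz : NotNonposInt z) : z ≠ 0 := by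
  simpa using hz 0

lemma add_natCast {z : ℂ} (hz : NotNonposInt z) (n : ℕ) : NotNonposInt (z + n) := fun m hm =>
  hz (m + n) (by push_cast; linear_combination hm)

lemma of_re_pos {z : ℂ} (hz : 0 < z.re) : NotNonposInt z := fun m hm => by
  simp only [hm, Complex.neg_re, Complex.natCast_re, Left.neg_pos_iff] at hz
  exact (Nat.cast_nonneg m).not_gt hz

end NotNonposInt

lemma poch_ne_zero {z : ℂ} (hz : NotNonposInt z) (n : ℕ) : poch z n ≠ 0 := by
  rw [poch_eq_prod, prod_ne_zero_iff]
  exact fun i _ h => hz i (eq_neg_of_add_eq_zero_left h)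

lemma Gamma_add_natCast {z : ℂ} (hz : NotNonposInt z) (n : ℕ) :
    Complex.Gamma (z + n) = poch z n * Complex.Gamma z :=
  (div_eq_iff (Complex.Gamma_ne_zero hz)).1 (Complex.Gamma_add_nat_div_Gamma_eq z hz)

lemma tendsto_inv_add_natCast {𝕜 : Type*} [NormedField 𝕜] [NormSMulClass ℤ 𝕜] (z : 𝕜) :
    Tendsto (fun n : ℕ => (z + n)⁻¹) atTop (𝓝 0) :=
  tendsto_inv₀_cobounded.comp ((tendsto_const_add_cobounded z).comp tendsto_natCast_atTop_cobounded)

lemma eq_zero_of_tendsto_natCast_mul {𝕜 : Type*} [RCLike 𝕜] {f : ℕ → 𝕜} (hf : Summable (‖f ·‖))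
    {L : 𝕜} (h : Tendsto (fun n : ℕ => (n : 𝕜) * f n) atTop (𝓝 L)) : L = 0 := by
  by_contra hL
  have hL' : 0 < ‖L‖ / 2 := by positivity
  have hlarge : ∀ᶠ n : ℕ in atTop, ‖L‖ / 2 < ‖(n : 𝕜) * f n‖ :=
    h.norm.eventually (lt_mem_nhds (half_lt_self (norm_pos_iff.2 hL)))
  have hharmonic : Summable (fun n : ℕ => ‖L‖ / 2 * (1 / n)) := by
    refine Summable.of_norm_bounded_eventually_nat hf ?_
    filter_upwards [hlarge, eventually_gt_atTop 0] with n hn hn0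
    rw [norm_mul, RCLike.norm_natCast] at hn
    rw [Real.norm_of_nonneg (by positivity), mul_one_div, div_le_iff₀ (by positivity)]
    linarith
  exact Real.not_summable_one_div_natCast ((summable_mul_left_iff hL'.ne').1 hharmonic)

lemma norm_le_norm_add_ofReal {z : ℂ} (hz : 0 ≤ z.re) {d : ℝ} (hd : 0 ≤ d) : ‖z‖ ≤ ‖z + d‖ := by
  rw [Complex.norm_def, Complex.norm_def]
  gcongr
  simp only [Complex.normSq_apply, Complex.add_re, Complex.add_im, Complex.ofReal_re,
    Complex.ofReal_im, add_zero]
  nlinarith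

lemma norm_poch_le_norm_poch_add_ofReal {z : ℂ} (hz : 0 ≤ z.re) {d : ℝ} (hd : 0 ≤ d) (k : ℕ) :
    ‖poch z k‖ ≤ ‖poch (z + d) k‖ := by
  simp only [poch_eq_prod, norm_prod]
  refine prod_le_prod (fun _ _ => norm_nonneg _) fun i _ => ?_
  rw [add_right_comm]
  exact norm_le_norm_add_ofReal (by simpa using add_nonneg hz i.cast_nonneg) hd

lemma tendsto_inv_poch_add_natCast (z : ℂ) {k : ℕ} (hk : k ≠ 0) :
    Tendsto (fun N : ℕ => (poch (z + N) k)⁻¹) atTop (𝓝 0) := by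
  have hfactor : ∀ i ∈ range k, Tendsto (fun N : ℕ => (z + N + i)⁻¹) atTop (𝓝 0) := fun i _ =>
    (tendsto_inv_add_natCast (z + i)).congr fun N => by rw [add_right_comm]
  simpa only [poch_eq_prod, prod_inv_distrib, prod_const, card_range, zero_pow hk] using
    tendsto_finsetProd (range k) hfactor

lemma GammaSeq_eq_div_poch (z : ℂ) (n : ℕ) :
    Complex.GammaSeq z n = (n : ℂ) ^ z * n.factorial / poch z (n + 1) := by
  rw [Complex.GammaSeq, poch_eq_prod]

lemma poch_ratio_eq_GammaSeq_ratio {z₁ z₂ w₁ w₂ : ℂ} (h : z₁ + z₂ = w₁ + w₂) {n : ℕ}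
    (hn : n ≠ 0) :
    poch z₁ (n + 1) * poch z₂ (n + 1) / (poch w₁ (n + 1) * poch w₂ (n + 1)) =
      Complex.GammaSeq w₁ n * Complex.GammaSeq w₂ n /
        (Complex.GammaSeq z₁ n * Complex.GammaSeq z₂ n) := by
  have hn' : (n : ℂ) ≠ 0 := Nat.cast_ne_zero.2 hn
  set X : ℂ := (n : ℂ) ^ (w₁ + w₂) * (n.factorial * n.factorial)
  have hX : X ≠ 0 := mul_ne_zero (by simp [Complex.cpow_eq_zero_iff, hn'])
    (by simp [Nat.factorial_ne_zero])
  have hw : Complex.GammaSeq w₁ n * Complex.GammaSeq w₂ n =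
      X * (poch w₁ (n + 1) * poch w₂ (n + 1))⁻¹ := by
    simp only [X, GammaSeq_eq_div_poch, Complex.cpow_add _ _ hn', div_eq_mul_inv, mul_inv]
    ring
  have hz : Complex.GammaSeq z₁ n * Complex.GammaSeq z₂ n =
      X * (poch z₁ (n + 1) * poch z₂ (n + 1))⁻¹ := by
    simp only [X, ← h, GammaSeq_eq_div_poch, Complex.cpow_add _ _ hn', div_eq_mul_inv, mul_inv]
    ring
  rw [hw, hz, mul_div_mul_left _ _ hX, inv_div_inv]

lemma tendsto_poch_ratio {z₁ z₂ w₁ w₂ : ℂ} (h : z₁ + z₂ = w₁ + w₂) :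
    Tendsto (fun N => poch z₁ N * poch z₂ N / (poch w₁ N * poch w₂ N)) atTop
      (𝓝 (Complex.Gamma w₁ * Complex.Gamma w₂ / (Complex.Gamma z₁ * Complex.Gamma z₂))) := by
  by_cases hΓ : Complex.Gamma z₁ * Complex.Gamma z₂ = 0
  · -- Mathlib's `Γ` vanishes at its poles `-m`, and `poch (-m) N = 0` for `N > m`
    rw [hΓ, div_zero]
    obtain ⟨m, hm⟩ : ∃ m : ℕ, z₁ = -m ∨ z₂ = -m := by
      rcases mul_eq_zero.1 hΓ with h0 | h0 <;> obtain ⟨m, hm⟩ := (Complex.Gamma_eq_zero_iff _).1 h0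
      exacts [⟨m, .inl hm⟩, ⟨m, .inr hm⟩]
    refine tendsto_const_nhds.congr' ?_
    filter_upwards [eventually_gt_atTop m] with N hN
    rcases hm with rfl | rfl <;> simp [poch_neg_natCast_of_lt hN]
  · rw [← tendsto_add_atTop_iff_nat 1]
    have hlim := ((Complex.GammaSeq_tendsto_Gamma w₁).mul (Complex.GammaSeq_tendsto_Gamma w₂)).div
      ((Complex.GammaSeq_tendsto_Gamma z₁).mul (Complex.GammaSeq_tendsto_Gamma z₂)) hΓ
    refine hlim.congr' ?_
    filter_upwards [eventually_ne_atTop 0] with n hn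
    exact (poch_ratio_eq_GammaSeq_ratio h hn).symm

noncomputable def twoF1Coeff (a b c : ℂ) (k : ℕ) : ℂ :=
  poch a k * poch b k / (poch c k * k.factorial)

lemma twoF1Coeff_zero (a b c : ℂ) : twoF1Coeff a b c 0 = 1 := by
  simp [twoF1Coeff, poch_zero]

lemma twoF1Coeff_succ (a b c : ℂ) (k : ℕ) :
    twoF1Coeff a b c (k + 1) = twoF1Coeff a b c k * ((a + k) * (b + k) / ((c + k) * (k + 1))) := by
  simp only [twoF1Coeff, poch_succ, Nat.factorial_succ, Nat.cast_mul, Nat.cast_succ]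
  rw [div_mul_div_comm]
  ring

lemma twoF1Coeff_add_one_right (a b : ℂ) {c : ℂ} (hc : c ≠ 0) (k : ℕ) :
    twoF1Coeff a b (c + 1) k = twoF1Coeff a b c k * (c / (c + k)) := by
  have h : poch (c + 1) k = poch c k * (c + k) / c := by
    rw [← poch_succ, poch_succ_left, mul_div_cancel_left₀ _ hc]
  simp only [twoF1Coeff, h, div_eq_mul_inv, mul_inv, inv_inv]
  ring

lemma twoF1Coeff_eq_mul_poch_div {c : ℂ} (hc : NotNonposInt c) (a b c' : ℂ) (k : ℕ) :
    twoF1Coeff a b c' k = twoF1Coeff a b c k * (poch c k / poch c' k) := by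
  have hpc := poch_ne_zero hc k
  simp only [twoF1Coeff]
  field_simp

section GaussSummation

variable {a b c : ℂ}

lemma summable_twoF1Coeff_add_one_right (hc : c ≠ 0) (hs : Summable (‖twoF1Coeff a b c ·‖)) :
    Summable (‖twoF1Coeff a b (c + 1) ·‖) := by
  have hsmall : ∀ᶠ k : ℕ in atTop, ‖c / (c + k)‖ ≤ 1 := by
    have := (tendsto_inv_add_natCast c).const_mul c
    rw [mul_zero] at this
    filter_upwards [this.norm.eventually (ge_mem_nhds (by simp : ‖(0 : ℂ)‖ < 1))] with k hk
    simpa [div_eq_mul_inv] using hk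
  refine Summable.of_norm_bounded_eventually_nat hs ?_
  filter_upwards [hsmall] with k hk
  rw [norm_norm, twoF1Coeff_add_one_right a b hc, norm_mul]
  exact mul_le_of_le_one_right (norm_nonneg _) hk

lemma summable_twoF1Coeff_add_natCast_right (hc : NotNonposInt c)
    (hs : Summable (‖twoF1Coeff a b c ·‖)) (N : ℕ) :
    Summable (‖twoF1Coeff a b (c + N) ·‖) := by
  induction N with
  | zero => simpa using hs
  | succ N ih =>
    simpa [add_assoc] using summable_twoF1Coeff_add_one_right (hc.add_natCast N).ne_zero ih

lemma tsum_twoF1Coeff_contiguous (hc : NotNonposInt c) (hs : Summable (‖twoF1Coeff a b c ·‖)) :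
    c * (c - a - b) * ∑' k, twoF1Coeff a b c k =
      (c - a) * (c - b) * ∑' k, twoF1Coeff a b (c + 1) k := by
  set t := twoF1Coeff a b c
  set u := twoF1Coeff a b (c + 1)
  set w : ℕ → ℂ := fun k => k * (c * t k)
  have htelescope (k : ℕ) :
      c * (c - a - b) * t k - (c - a) * (c - b) * u k = w k - w (k + 1) := by
    have hck : c + k ≠ 0 := fun h => hc k (eq_neg_of_add_eq_zero_left h)
    have hk : (k : ℂ) + 1 ≠ 0 := by exact_mod_cast k.succ_ne_zero
    simp only [u, w, t, twoF1Coeff_add_one_right a b hc.ne_zero, twoF1Coeff_succ, Nat.cast_succ]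
    field_simp
    ring
  set L := c * (c - a - b) * ∑' k, t k - (c - a) * (c - b) * ∑' k, u k
  have hL : HasSum (fun k => c * (c - a - b) * t k - (c - a) * (c - b) * u k) L :=
    (hs.of_norm.hasSum.mul_left _).sub
      ((summable_twoF1Coeff_add_one_right hc.ne_zero hs).of_norm.hasSum.mul_left _)
  -- the partial sums telescope to `-w n`; a nonzero limit of `w n` would make `t n ≍ 1 / n`
  have hw : Tendsto w atTop (𝓝 (-L)) := by
    refine hL.tendsto_sum_nat.neg.congr fun n => ?_
    simp only [htelescope, sum_range_sub', w, Nat.cast_zero, zero_mul, zero_sub, neg_neg]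
  have hL0 : -L = 0 :=
    eq_zero_of_tendsto_natCast_mul (by simpa only [norm_mul] using hs.mul_left ‖c‖) hw
  exact sub_eq_zero.1 (neg_eq_zero.1 hL0)

lemma poch_mul_tsum_twoF1Coeff (hc : NotNonposInt c) (hs : Summable (‖twoF1Coeff a b c ·‖))
    (N : ℕ) :
    poch c N * poch (c - a - b) N * ∑' k, twoF1Coeff a b c k =
      poch (c - a) N * poch (c - b) N * ∑' k, twoF1Coeff a b (c + N) k := by
  induction N with
  | zero => simp [poch_zero]
  | succ N ih =>
    have hstep := tsum_twoF1Coeff_contiguous (a := a) (b := b) (hc.add_natCast N)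
      (summable_twoF1Coeff_add_natCast_right hc hs N)
    simp only [poch_succ, Nat.cast_succ, ← add_assoc]
    linear_combination ((c - a - b) + N) * (c + N) * ih + poch (c - a) N * poch (c - b) N * hstep

lemma tendsto_tsum_twoF1Coeff_add_natCast (hc : NotNonposInt c)
    (hs : Summable (‖twoF1Coeff a b c ·‖)) :
    Tendsto (fun N : ℕ => ∑' k, twoF1Coeff a b (c + N) k) atTop (𝓝 1) := by
  obtain ⟨N₀, hN₀⟩ : ∃ N₀ : ℕ, -c.re ≤ N₀ := exists_nat_ge _
  have hre : 0 ≤ (c + N₀).re := by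
    simp only [Complex.add_re, Complex.natCast_re]
    linarith
  have hpointwise (k : ℕ) : Tendsto (fun N : ℕ => twoF1Coeff a b (c + N) k) atTop
      (𝓝 (if k = 0 then 1 else 0)) := by
    split_ifs with hk
    · simp [hk, twoF1Coeff_zero]
    · have := (tendsto_inv_poch_add_natCast c hk).const_mul (poch a k * poch b k / k.factorial)
      rw [mul_zero] at this
      exact this.congr fun N => by simp only [twoF1Coeff]; ring
  have hbound : ∀ᶠ N : ℕ in atTop, ∀ k,
      ‖twoF1Coeff a b (c + N) k‖ ≤ ‖twoF1Coeff a b (c + N₀) k‖ := by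
    filter_upwards [eventually_ge_atTop N₀] with N hN k
    obtain ⟨n, rfl⟩ := Nat.exists_eq_add_of_le hN
    have hpos : 0 < ‖poch (c + N₀) k‖ * k.factorial :=
      mul_pos (norm_pos_iff.2 (poch_ne_zero (hc.add_natCast N₀) k)) (by positivity)
    simp only [twoF1Coeff, norm_div, norm_mul, Complex.norm_natCast]
    gcongr
    simpa [add_assoc] using norm_poch_le_norm_poch_add_ofReal hre n.cast_nonneg k
  simpa using tendsto_tsum_of_dominated_convergence
    (summable_twoF1Coeff_add_natCast_right hc hs N₀) hpointwise hbound

/-- Gauss's summation theorem. -/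
theorem tsum_twoF1Coeff_eq_Gamma (hc : NotNonposInt c) (hre : 0 < (c - a - b).re)
    (hs : Summable (‖twoF1Coeff a b c ·‖)) :
    ∑' k, twoF1Coeff a b c k =
      Complex.Gamma c * Complex.Gamma (c - a - b) /
        (Complex.Gamma (c - a) * Complex.Gamma (c - b)) := by
  have hrescale (N : ℕ) : ∑' k, twoF1Coeff a b c k =
      poch (c - a) N * poch (c - b) N / (poch c N * poch (c - a - b) N) *
        ∑' k, twoF1Coeff a b (c + N) k := by
    rw [div_mul_eq_mul_div, eq_div_iff (mul_ne_zero (poch_ne_zero hc N)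
      (poch_ne_zero (.of_re_pos hre) N))]
    linear_combination poch_mul_tsum_twoF1Coeff hc hs N
  have hlim := (tendsto_poch_ratio (z₁ := c - a) (z₂ := c - b) (w₁ := c) (w₂ := c - a - b)
    (by ring)).mul (tendsto_tsum_twoF1Coeff_add_natCast hc hs)
  rw [mul_one] at hlim
  exact tendsto_nhds_unique (tendsto_const_nhds.congr hrescale) hlim

lemma tsum_twoF1Coeff_add_natCast_eq_Gamma (hc : NotNonposInt c) (hcb : NotNonposInt (c - b))
    (hre : 0 < (c - a - b).re) (j : ℕ) (hs : Summable (‖twoF1Coeff (a + j) b (c + j) ·‖)) :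
    ∑' k, twoF1Coeff (a + j) b (c + j) k =
      Complex.Gamma c * Complex.Gamma (c - a - b) /
        (Complex.Gamma (c - a) * Complex.Gamma (c - b)) * (poch c j / poch (c - b) j) := by
  have hre' : 0 < (c + j - (a + j) - b).re := by rwa [add_sub_add_right_eq_sub]
  rw [tsum_twoF1Coeff_eq_Gamma (hc.add_natCast j) hre' hs, add_sub_add_right_eq_sub,
    add_sub_right_comm, Gamma_add_natCast hc, Gamma_add_natCast hcb]
  ring

end GaussSummation

lemma F1term_one_eq (a b₁ b₂ c x : ℂ) (j k : ℕ) :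
    F1term a b₁ b₂ c x 1 (j, k) =
      twoF1Coeff a b₁ c j * x ^ j * twoF1Coeff (a + j) b₂ (c + j) k := by
  simp only [F1term, twoF1Coeff, poch_add, one_pow, mul_one]
  ring

lemma tsum_F1term_one_row {a b₁ b₂ c : ℂ} (hc : NotNonposInt c) (hcb : NotNonposInt (c - b₂))
    (hre : 0 < (c - a - b₂).re) (x : ℂ) (j : ℕ)
    (hrow : Summable (fun k => ‖F1term a b₁ b₂ c x 1 (j, k)‖)) :
    ∑' k, F1term a b₁ b₂ c x 1 (j, k) =
      Complex.Gamma c * Complex.Gamma (c - a - b₂) /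
        (Complex.Gamma (c - a) * Complex.Gamma (c - b₂)) *
        (twoF1Coeff a b₁ (c - b₂) j * x ^ j) := by
  simp only [F1term_one_eq, tsum_mul_left, twoF1Coeff_eq_mul_poch_div hc a b₁ (c - b₂)]
  rw [mul_right_comm _ _ (x ^ j), mul_left_comm]
  rcases eq_or_ne (twoF1Coeff a b₁ c j * x ^ j) 0 with hd | hd
  · rw [hd, zero_mul, zero_mul]
  have hs : Summable (‖twoF1Coeff (a + j) b₂ (c + j) ·‖) := by
    refine (summable_mul_left_iff (norm_ne_zero_iff.2 hd)).1 ?_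
    simpa only [F1term_one_eq, norm_mul] using hrow
  rw [tsum_twoF1Coeff_add_natCast_eq_Gamma hc hcb hre j hs]

theorem F1_at_y_eq_one_general (a b₁ b₂ c : ℂ) (hc : NotNonposInt c) (hcb : NotNonposInt (c - b₂))
    (hre : 0 < (c - a - b₂).re) (x : ℝ)
    (hsum : Summable (fun p : ℕ × ℕ => ‖F1term a b₁ b₂ c (x : ℂ) 1 p‖)) :
    F1 a b₁ b₂ c (x : ℂ) 1 =
      Complex.Gamma c * Complex.Gamma (c - a - b₂) /
          (Complex.Gamma (c - a) * Complex.Gamma (c - b₂)) *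
        twoF1 a b₁ (c - b₂) (x : ℂ) := by
  rw [F1, hsum.of_norm.tsum_prod, twoF1, ← tsum_mul_left]
  exact tsum_congr fun j => tsum_F1term_one_row hc hcb hre x j (hsum.prod_factor j)

theorem F1_at_y_eq_one (a b₁ b₂ c : ℂ) (hc : NotNonposInt c) (hcb : NotNonposInt (c - b₂))
    (hre : 0 < (c - a - b₂).re) (x : ℝ) (hx : |x| < 1)
    (hsum : Summable (fun p : ℕ × ℕ => ‖F1term a b₁ b₂ c (x : ℂ) 1 p‖)) :
    F1 a b₁ b₂ c (x : ℂ) 1 =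
      Complex.Gamma c * Complex.Gamma (c - a - b₂) /
          (Complex.Gamma (c - a) * Complex.Gamma (c - b₂)) *
        twoF1 a b₁ (c - b₂) (x : ℂ) :=
  F1_at_y_eq_one_general a b₁ b₂ c hc hcb hre x hsum
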